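/- Annotations are sound with respect to the children of the instance: if C,J ⊢K K → (r,κ) is derivable, then (i) if J is an object {k1:J1,…,kn:Jn} then κ ⊆ {k1,…,kn}; (ii) if J is an array [J1,…,Jn] then κ ⊆ {1,…,n}; (iii) if J is a base value (null, boolean, number, or string) then κ = ∅. The same three properties hold for the schema judgment C,J ⊢S S → (r,κ) and the keyword-list judgment C,J ⊢L ⟨K1,…,Kn⟩ → (r,κ). -/

import Mathlib

/-!
Formalization of the minimal fragment of Modern JSON Schema (Draft 2020-12)
following Attouche, Baazizi, Colazzo, Ghelli, Sartiani, Scherzinger,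
"Validation of Modern JSON Schema: Formalization and Complexity".
-/

namespace MJS

/-- JSON types. -/
inductive JTy : Type
  | null | boolean | number | string | array | object
  deriving DecidableEq

/-- JSON values: base values, arrays and objects (objects are supposed to have
pairwise distinct member names). -/
inductive JVal : Type
  | null : JVal
  | bool : Bool → JVal
  | num : ℚ → JVal
  | str : String → JVal
  | arr : List JVal → JVal
  | obj : List (String × JVal) → JVal

def typeOf : JVal → JTy
  | .null => .null
  | .bool _ => .boolean
  | .num _ => .number
  | .str _ => .string
  | .arr _ => .array
  | .obj _ => .object

-- Schemas of the minimal fragment: `true`, `false`, or an object of keywords.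
mutual
  inductive Schema : Type
    | tru : Schema
    | fls : Schema
    | obj : List Keyword → Schema

  inductive Keyword : Type
    | type : JTy → Keyword
    | minimum : ℚ → Keyword
    | pattern : String → Keyword
    | properties : List (String × Schema) → Keyword
    | patternProperties : List (String × Schema) → Keyword
    | anyOf : List Schema → Keyword
    | allOf : List Schema → Keyword
    | oneOf : List Schema → Keyword
    | not : Schema → Keyword
    | ref : String → String → Keyword
    | dynamicRef : String → String → Keyword
    | anchor : String → Keyword
    | dynamicAnchor : String → Keyword
    | id : String → Keyword
    | defs : List (String × Schema) → Keyword
    | additionalProperties : Schema → Keyword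
    | items : Schema → Keyword
    | unevaluatedProperties : Schema → Keyword
    | unevaluatedItems : Schema → Keyword
end

/-- Annotations: evaluated object member names, or evaluated array positions (1-based). -/
abbrev Ann := String ⊕ ℕ

/-- A context is a list of absolute URIs (without repetitions). -/
abbrev Ctx := List String

/-- Saturation `C +? u`. -/
def saturate (C : Ctx) (u : String) : Ctx := if u ∈ C then C else C ++ [u]

/-- The environment of a closed schema: `load` maps each absolute URI to its
resource, `get R f` returns the subschema of `R` named by the (static or
dynamic) anchor `f`, `dget R f` returns the subschema of `R` carrying
`$dynamicAnchor : f` (`none` if there is none), and `lang p s` tells whether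
the string `s` belongs to the language of the pattern `p`. -/
structure Env where
  load : String → Schema
  get : Schema → String → Option Schema
  dget : Schema → String → Option Schema
  lang : String → String → Bool

/-- `fstURI C f`: the first URI `u` of the list `C` with `dget (load u) f ≠ ⊥`. -/
def fstURI (E : Env) (C : Ctx) (f : String) : Option String :=
  C.find? fun u => (E.dget (E.load u) f).isSome

def Schema.keywords : Schema → List Keyword
  | .obj ks => ks
  | _ => []

/-- The four annotation-dependent keywords. -/
def Keyword.isDependent : Keyword → Bool
  | .additionalProperties _ => true
  | .items _ => true
  | .unevaluatedProperties _ => true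
  | .unevaluatedItems _ => true
  | _ => false

/-- `propsOf`: a member name `k` is directly matched by an adjacent
`properties`/`patternProperties` keyword of the list `Ks`. -/
def keyMatchedB (E : Env) (Ks : List Keyword) (k : String) : Bool :=
  Ks.any fun K =>
    match K with
    | .properties kvs => kvs.any fun kv => kv.1 == k
    | .patternProperties kvs => kvs.any fun kv => E.lang kv.1 k
    | _ => false

def objNames (members : List (String × JVal)) : Finset Ann :=
  (members.map fun m => (Sum.inl m.1 : Ann)).toFinset

def arrPositions (n : ℕ) : Finset Ann :=
  (Finset.range n).image fun i => (Sum.inr (i + 1) : Ann)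

def listUnion (l : List (Finset Ann)) : Finset Ann := l.foldr (· ∪ ·) ∅

/-- The pairs (member value, subschema) matched by a `properties` keyword. -/
def matchedPairs (members : List (String × JVal)) (kvs : List (String × Schema)) :
    List (JVal × Schema) :=
  members.flatMap fun m => kvs.filterMap fun kv =>
    if m.1 = kv.1 then some (m.2, kv.2) else none

def matchedNames (members : List (String × JVal)) (kvs : List (String × Schema)) :
    Finset Ann :=
  ((members.filter fun m => kvs.any fun kv => kv.1 == m.1).map
    fun m => (Sum.inl m.1 : Ann)).toFinset

/-- The pairs (member value, subschema) matched by a `patternProperties` keyword. -/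
def patMatchedPairs (E : Env) (members : List (String × JVal))
    (kvs : List (String × Schema)) : List (JVal × Schema) :=
  members.flatMap fun m => kvs.filterMap fun kv =>
    if E.lang kv.1 m.1 then some (m.2, kv.2) else none

def patMatchedNames (E : Env) (members : List (String × JVal))
    (kvs : List (String × Schema)) : Finset Ann :=
  ((members.filter fun m => kvs.any fun kv => E.lang kv.1 m.1).map
    fun m => (Sum.inl m.1 : Ann)).toFinset

/-- Object members whose name is matched by no adjacent
`properties`/`patternProperties` keyword (used by `additionalProperties`). -/
def unmatchedMembers (E : Env) (Ks : List Keyword) (members : List (String × JVal)) :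
    List (String × JVal) :=
  members.filter fun m => !(keyMatchedB E Ks m.1)

/-- Array items whose (1-based) position is not among the accumulated annotations
(used by `unevaluatedItems`). -/
def unevalIdx (is : List JVal) (κ : Finset Ann) : List JVal :=
  ((is.zipIdx.map Prod.swap).filter fun p => !(decide ((Sum.inr (p.1 + 1) : Ann) ∈ κ))).map (·.2)

/-- Object members whose name is not among the accumulated annotations
(used by `unevaluatedProperties`). -/
def unevalMembers (members : List (String × JVal)) (κ : Finset Ann) :
    List (String × JVal) :=
  members.filter fun m => !(decide ((Sum.inl m.1 : Ann) ∈ κ))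

mutual
  /-- The schema judgment `C, J ⊢S S → (r, κ)`. -/
  inductive SJudg (E : Env) : Ctx → JVal → Schema → Bool → Finset Ann → Prop
    | tru {C J} : SJudg E C J .tru true ∅
    | fls {C J} : SJudg E C J .fls false ∅
    | objT {C J Ks κ} : LJudg E C J Ks true κ → SJudg E C J (.obj Ks) true κ
    | objF {C J Ks κ} : LJudg E C J Ks false κ → SJudg E C J (.obj Ks) false ∅

  /-- The keyword judgment `C, J ⊢K K → (r, κ)`. -/
  inductive KJudg (E : Env) : Ctx → JVal → Keyword → Bool → Finset Ann → Prop
    | type {C J t} : KJudg E C J (.type t) (typeOf J == t) ∅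
    | minimumTriv {C J q} : typeOf J ≠ .number → KJudg E C J (.minimum q) true ∅
    | minimum {C d q} : KJudg E C (.num d) (.minimum q) (decide (q ≤ d)) ∅
    | patternTriv {C J p} : typeOf J ≠ .string → KJudg E C J (.pattern p) true ∅
    | pattern {C s p} : KJudg E C (.str s) (.pattern p) (E.lang p s) ∅
    | anchor {C J a} : KJudg E C J (.anchor a) true ∅
    | dynamicAnchor {C J a} : KJudg E C J (.dynamicAnchor a) true ∅
    | id {C J u} : KJudg E C J (.id u) true ∅
    | defs {C J kvs} : KJudg E C J (.defs kvs) true ∅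
    | anyOf {C J l} (rs : List (Bool × Finset Ann)) :
        rs.length = l.length →
        (∀ i (h1 : i < l.length) (h2 : i < rs.length),
          SJudg E C J (l.get ⟨i, h1⟩) (rs.get ⟨i, h2⟩).1 (rs.get ⟨i, h2⟩).2) →
        KJudg E C J (.anyOf l) (rs.any (·.1)) (listUnion (rs.map (·.2)))
    | allOf {C J l} (rs : List (Bool × Finset Ann)) :
        rs.length = l.length →
        (∀ i (h1 : i < l.length) (h2 : i < rs.length),
          SJudg E C J (l.get ⟨i, h1⟩) (rs.get ⟨i, h2⟩).1 (rs.get ⟨i, h2⟩).2) →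
        KJudg E C J (.allOf l) (rs.all (·.1)) (listUnion (rs.map (·.2)))
    | oneOf {C J l} (rs : List (Bool × Finset Ann)) :
        rs.length = l.length →
        (∀ i (h1 : i < l.length) (h2 : i < rs.length),
          SJudg E C J (l.get ⟨i, h1⟩) (rs.get ⟨i, h2⟩).1 (rs.get ⟨i, h2⟩).2) →
        KJudg E C J (.oneOf l) (rs.countP (·.1) == 1) (listUnion (rs.map (·.2)))
    | not {C J S r σ} : SJudg E C J S r σ → KJudg E C J (.not S) (!r) σ
    | propertiesTriv {C J kvs} : typeOf J ≠ .object → KJudg E C J (.properties kvs) true ∅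
    | properties {C members kvs} (rs : List (Bool × Finset Ann)) :
        rs.length = (matchedPairs members kvs).length →
        (∀ i (h1 : i < (matchedPairs members kvs).length) (h2 : i < rs.length),
          SJudg E C ((matchedPairs members kvs).get ⟨i, h1⟩).1
            ((matchedPairs members kvs).get ⟨i, h1⟩).2
            (rs.get ⟨i, h2⟩).1 (rs.get ⟨i, h2⟩).2) →
        KJudg E C (.obj members) (.properties kvs) (rs.all (·.1)) (matchedNames members kvs)
    | patternPropertiesTriv {C J kvs} : typeOf J ≠ .object →
        KJudg E C J (.patternProperties kvs) true ∅
    | patternProperties {C members kvs} (rs : List (Bool × Finset Ann)) :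
        rs.length = (patMatchedPairs E members kvs).length →
        (∀ i (h1 : i < (patMatchedPairs E members kvs).length) (h2 : i < rs.length),
          SJudg E C ((patMatchedPairs E members kvs).get ⟨i, h1⟩).1
            ((patMatchedPairs E members kvs).get ⟨i, h1⟩).2
            (rs.get ⟨i, h2⟩).1 (rs.get ⟨i, h2⟩).2) →
        KJudg E C (.obj members) (.patternProperties kvs) (rs.all (·.1))
          (patMatchedNames E members kvs)
    | ref {C J u f S' r σ} :
        E.get (E.load u) f = some S' →
        SJudg E (saturate C u) J S' r σ →
        KJudg E C J (.ref u f) r σ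
    | dynamicRefAsRef {C J u f S' r σ} :
        E.dget (E.load u) f = none →
        E.get (E.load u) f = some S' →
        SJudg E (saturate C u) J S' r σ →
        KJudg E C J (.dynamicRef u f) r σ
    | dynamicRef {C J u f v S' r σ} :
        (E.dget (E.load u) f).isSome →
        fstURI E (saturate C u) f = some v →
        E.dget (E.load v) f = some S' →
        SJudg E (saturate C v) J S' r σ →
        KJudg E C J (.dynamicRef u f) r σ

  /-- The keyword-list judgment `C, J ⊢L ⟨K1,…,Kn⟩ → (r, κ)`; keywords are
  evaluated left to right, and the four dependent keywords exploit the
  annotations accumulated by the preceding keywords. -/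
  inductive LJudg (E : Env) : Ctx → JVal → List Keyword → Bool → Finset Ann → Prop
    | nil {C J} : LJudg E C J [] true ∅
    | snocIndep {C J Ks K rl κl r κ} :
        K.isDependent = false →
        LJudg E C J Ks rl κl →
        KJudg E C J K r κ →
        LJudg E C J (Ks ++ [K]) (rl && r) (κl ∪ κ)
    | additionalPropertiesTriv {C J Ks S rl κl} :
        typeOf J ≠ .object →
        LJudg E C J Ks rl κl →
        LJudg E C J (Ks ++ [.additionalProperties S]) rl κl
    | additionalProperties {C members Ks S rl κl} (rs : List (Bool × Finset Ann)) :
        LJudg E C (.obj members) Ks rl κl →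
        rs.length = (unmatchedMembers E Ks members).length →
        (∀ i (h1 : i < (unmatchedMembers E Ks members).length) (h2 : i < rs.length),
          SJudg E C ((unmatchedMembers E Ks members).get ⟨i, h1⟩).2 S
            (rs.get ⟨i, h2⟩).1 (rs.get ⟨i, h2⟩).2) →
        LJudg E C (.obj members) (Ks ++ [.additionalProperties S])
          (rl && rs.all (·.1)) (objNames members)
    | unevaluatedPropertiesTriv {C J Ks S rl κl} :
        typeOf J ≠ .object →
        LJudg E C J Ks rl κl →
        LJudg E C J (Ks ++ [.unevaluatedProperties S]) rl κl
    | unevaluatedProperties {C members Ks S rl κl} (rs : List (Bool × Finset Ann)) :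
        LJudg E C (.obj members) Ks rl κl →
        rs.length = (unevalMembers members κl).length →
        (∀ i (h1 : i < (unevalMembers members κl).length) (h2 : i < rs.length),
          SJudg E C ((unevalMembers members κl).get ⟨i, h1⟩).2 S
            (rs.get ⟨i, h2⟩).1 (rs.get ⟨i, h2⟩).2) →
        LJudg E C (.obj members) (Ks ++ [.unevaluatedProperties S])
          (rl && rs.all (·.1)) (objNames members)
    | itemsTriv {C J Ks S rl κl} :
        typeOf J ≠ .array →
        LJudg E C J Ks rl κl →
        LJudg E C J (Ks ++ [.items S]) rl κl
    | items {C is Ks S rl κl} (rs : List (Bool × Finset Ann)) :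
        LJudg E C (.arr is) Ks rl κl →
        rs.length = is.length →
        (∀ i (h1 : i < is.length) (h2 : i < rs.length),
          SJudg E C (is.get ⟨i, h1⟩) S (rs.get ⟨i, h2⟩).1 (rs.get ⟨i, h2⟩).2) →
        LJudg E C (.arr is) (Ks ++ [.items S]) (rl && rs.all (·.1))
          (arrPositions is.length)
    | unevaluatedItemsTriv {C J Ks S rl κl} :
        typeOf J ≠ .array →
        LJudg E C J Ks rl κl →
        LJudg E C J (Ks ++ [.unevaluatedItems S]) rl κl
    | unevaluatedItems {C is Ks S rl κl} (rs : List (Bool × Finset Ann)) :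
        LJudg E C (.arr is) Ks rl κl →
        rs.length = (unevalIdx is κl).length →
        (∀ i (h1 : i < (unevalIdx is κl).length) (h2 : i < rs.length),
          SJudg E C ((unevalIdx is κl).get ⟨i, h1⟩) S
            (rs.get ⟨i, h2⟩).1 (rs.get ⟨i, h2⟩).2) →
        LJudg E C (.arr is) (Ks ++ [.unevaluatedItems S]) (rl && rs.all (·.1))
          (arrPositions is.length)
end

end MJS
namespace MJS

/-- The three soundness conditions for an annotation set `κ` produced on the
instance `J`: on objects, `κ` only contains member names of `J`; on arrays,
only positions `1,…,n` of `J`; on base values, `κ = ∅`. -/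
def AnnSound (J : JVal) (κ : Finset Ann) : Prop :=
  (∀ members, J = JVal.obj members → κ ⊆ objNames members) ∧
  (∀ is, J = JVal.arr is → κ ⊆ arrPositions is.length) ∧
  ((typeOf J = .null ∨ typeOf J = .boolean ∨ typeOf J = .number ∨
      typeOf J = .string) → κ = ∅)

/- Soundness means `κ ⊆ childAnns J`, a condition stable under unions. Every rule returns `∅`,
the annotations of premises on the same instance `J` (or their union), or member names / item
positions of `J` itself, so the claim follows by mutual induction on derivations; the premises on
children of `J` never contribute annotations. -/
def childAnns : JVal → Finset Ann
  | .obj members => objNames members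
  | .arr is => arrPositions is.length
  | _ => ∅

theorem annSound_iff_subset_childAnns {J : JVal} {κ : Finset Ann} :
    AnnSound J κ ↔ κ ⊆ childAnns J := by
  cases J <;> simp [AnnSound, childAnns, typeOf]

theorem listUnion_subset_iff {l : List (Finset Ann)} {s : Finset Ann} :
    listUnion l ⊆ s ↔ ∀ κ ∈ l, κ ⊆ s := by
  induction l with
  | nil => simp [listUnion]
  | cons κ l ih => simp [listUnion, ← ih, Finset.union_subset_iff]

theorem listUnion_map_subset {rs : List (Bool × Finset Ann)} {s : Finset Ann}
    (h : ∀ i (hi : i < rs.length), (rs.get ⟨i, hi⟩).2 ⊆ s) :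
    listUnion (rs.map (·.2)) ⊆ s := by
  refine listUnion_subset_iff.mpr fun κ hκ => ?_
  obtain ⟨p, hp, rfl⟩ := List.mem_map.mp hκ
  obtain ⟨i, rfl⟩ := List.get_of_mem hp
  exact h i i.2

theorem matchedNames_subset_objNames (members : List (String × JVal))
    (kvs : List (String × Schema)) : matchedNames members kvs ⊆ objNames members := by
  intro a
  simp only [matchedNames, objNames, List.mem_toFinset, List.mem_map, List.mem_filter]
  exact fun ⟨m, ⟨hm, _⟩, ha⟩ => ⟨m, hm, ha⟩

theorem patMatchedNames_subset_objNames (E : Env) (members : List (String × JVal))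
    (kvs : List (String × Schema)) : patMatchedNames E members kvs ⊆ objNames members := by
  intro a
  simp only [patMatchedNames, objNames, List.mem_toFinset, List.mem_map, List.mem_filter]
  exact fun ⟨m, ⟨hm, _⟩, ha⟩ => ⟨m, hm, ha⟩

variable {E : Env}

mutual

theorem SJudg.subset_childAnns {C : Ctx} {J : JVal} {S : Schema} {r : Bool}
    {κ : Finset Ann} : SJudg E C J S r κ → κ ⊆ childAnns J
  | .tru | .fls | .objF _ => Finset.empty_subset _
  | .objT h => h.subset_childAnns

theorem KJudg.subset_childAnns {C : Ctx} {J : JVal} {K : Keyword} {r : Bool}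
    {κ : Finset Ann} : KJudg E C J K r κ → κ ⊆ childAnns J
  | .type | .minimumTriv _ | .minimum | .patternTriv _ | .pattern | .anchor
  | .dynamicAnchor | .id | .defs | .propertiesTriv _ | .patternPropertiesTriv _ =>
      Finset.empty_subset _
  | .anyOf _ hlen h | .allOf _ hlen h | .oneOf _ hlen h =>
      listUnion_map_subset fun i hi => (h i (hlen ▸ hi) hi).subset_childAnns
  | .not h => h.subset_childAnns
  | .properties .. => matchedNames_subset_objNames _ _
  | .patternProperties .. => patMatchedNames_subset_objNames _ _ _
  | .ref _ h | .dynamicRefAsRef _ _ h | .dynamicRef _ _ _ h => h.subset_childAnns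

theorem LJudg.subset_childAnns {C : Ctx} {J : JVal} {Ks : List Keyword} {r : Bool}
    {κ : Finset Ann} : LJudg E C J Ks r κ → κ ⊆ childAnns J
  | .nil => Finset.empty_subset _
  | .snocIndep _ hl hk => Finset.union_subset hl.subset_childAnns hk.subset_childAnns
  | .additionalPropertiesTriv _ h | .unevaluatedPropertiesTriv _ h | .itemsTriv _ h
  | .unevaluatedItemsTriv _ h => h.subset_childAnns
  | .additionalProperties .. | .unevaluatedProperties .. | .items .. | .unevaluatedItems .. =>
      subset_rfl

end

/-- Annotations are sound with respect to the children of the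
instance, for the keyword judgment, the schema judgment, and the keyword-list
judgment. -/
theorem statement3 (E : Env) :
    (∀ (C : Ctx) (J : JVal) (K : Keyword) (r : Bool) (κ : Finset Ann),
      KJudg E C J K r κ → AnnSound J κ) ∧
    (∀ (C : Ctx) (J : JVal) (S : Schema) (r : Bool) (κ : Finset Ann),
      SJudg E C J S r κ → AnnSound J κ) ∧
    (∀ (C : Ctx) (J : JVal) (Ks : List Keyword) (r : Bool) (κ : Finset Ann),
      LJudg E C J Ks r κ → AnnSound J κ) := by
  simp only [annSound_iff_subset_childAnns]
  exact ⟨fun _ _ _ _ _ h => h.subset_childAnns, fun _ _ _ _ _ h => h.subset_childAnns,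
    fun _ _ _ _ _ h => h.subset_childAnns⟩

end MJS
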